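/- The companion poly-Bernoulli polynomials satisfy C_n^{(k)}(z) = ∑_{m=0}^n C(n,m) B_m(z) · C_{n-m}^{(k-1)}/(n-m+1) for k ≥ 2 and n ≥ 0. -/

import Mathlib

/-- Generating function `Li_k(1-e^{-t})/(1-e^{-t})` of the poly-Bernoulli numbers,
as a formal power series over `ℚ` (coefficientwise: `∑_{m≥1} (1-e^{-t})^{m-1}/m^k`). -/
noncomputable def pbGF (k : ℕ) : PowerSeries ℚ :=
  PowerSeries.mk fun n => ∑ m ∈ Finset.range (n + 1),
    ((m + 1 : ℚ) ^ k)⁻¹ *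
      PowerSeries.coeff (R := ℚ) n ((1 - PowerSeries.rescale (-1) (PowerSeries.exp ℚ)) ^ m)

/-- Poly-Bernoulli numbers `B_n^{(k)}`. -/
noncomputable def polyBernoulliNum (k n : ℕ) : ℚ :=
  (Nat.factorial n : ℚ) * PowerSeries.coeff (R := ℚ) n (pbGF k)

/-- Generating function `Li_k(1-e^{-t})/(e^t-1) = e^{-t}·Li_k(1-e^{-t})/(1-e^{-t})`. -/
noncomputable def cGF (k : ℕ) : PowerSeries ℚ :=
  PowerSeries.rescale (-1) (PowerSeries.exp ℚ) * pbGF k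

/-- Companion poly-Bernoulli numbers `C_n^{(k)}`. -/
noncomputable def polyCNum (k n : ℕ) : ℚ :=
  (Nat.factorial n : ℚ) * PowerSeries.coeff (R := ℚ) n (cGF k)

/-- Poly-Bernoulli polynomials `B_n^{(k)}(z)` (EGF `e^{zt}·Li_k(1-e^{-t})/(1-e^{-t})`). -/
noncomputable def polyBernoulliPoly (k n : ℕ) (z : ℚ) : ℚ :=
  ∑ j ∈ Finset.range (n + 1), (n.choose j : ℚ) * polyBernoulliNum k j * z ^ (n - j)

/-- Companion poly-Bernoulli polynomials `C_n^{(k)}(z)` (EGF `e^{zt}·Li_k(1-e^{-t})/(e^t-1)`). -/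
noncomputable def polyCPoly (k n : ℕ) (z : ℚ) : ℚ :=
  ∑ j ∈ Finset.range (n + 1), (n.choose j : ℚ) * polyCNum k j * z ^ (n - j)


open PowerSeries Finset

noncomputable def Ee : PowerSeries ℚ := PowerSeries.rescale (-1) (PowerSeries.exp ℚ)
noncomputable def uu : PowerSeries ℚ := 1 - Ee

lemma hu0 : PowerSeries.constantCoeff (R := ℚ) uu = 0 := by
  rw [uu, Ee, map_sub, map_one, ← PowerSeries.coeff_zero_eq_constantCoeff_apply,
    PowerSeries.coeff_rescale, PowerSeries.coeff_zero_eq_constantCoeff_apply,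
    PowerSeries.constantCoeff_exp]
  norm_num

lemma hupow {n m : ℕ} (h : n < m) : PowerSeries.coeff (R := ℚ) n (uu ^ m) = 0 := by
  have hd : (PowerSeries.X : ℚ⟦X⟧) ^ m ∣ uu ^ m :=
    pow_dvd_pow_of_dvd (PowerSeries.X_dvd_iff.mpr hu0) m
  exact (PowerSeries.X_pow_dvd_iff.mp hd) n h

/-- Partial sum approximation of `pbGF`. -/
noncomputable def Spb (k N : ℕ) : PowerSeries ℚ :=
  ∑ m ∈ Finset.range N, ((m + 1 : ℚ) ^ k)⁻¹ • uu ^ m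

lemma coeff_Spb (k : ℕ) {n N : ℕ} (h : n < N) :
    PowerSeries.coeff (R := ℚ) n (Spb k N) = PowerSeries.coeff (R := ℚ) n (pbGF k) := by
  rw [Spb, map_sum, pbGF, PowerSeries.coeff_mk]
  rw [← Finset.sum_subset (Finset.range_subset_range.mpr h)]
  · exact Finset.sum_congr rfl fun m _ => by rw [map_smul, smul_eq_mul, uu, Ee]
  · intro m _ hm
    rw [map_smul, smul_eq_mul, hupow (by simpa using hm), mul_zero]

lemma coeff_mul_congr (a f g : PowerSeries ℚ) (n : ℕ)
    (h : ∀ i ≤ n, PowerSeries.coeff (R := ℚ) i f = PowerSeries.coeff (R := ℚ) i g) :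
    PowerSeries.coeff (R := ℚ) n (a * f) = PowerSeries.coeff (R := ℚ) n (a * g) := by
  rw [PowerSeries.coeff_mul, PowerSeries.coeff_mul]
  refine Finset.sum_congr rfl fun p hp => ?_
  rw [h p.2 (by rw [Finset.HasAntidiagonal.mem_antidiagonal] at hp; omega)]

lemma deriv_Ee : d⁄dX ℚ Ee = -Ee := by
  ext n
  rw [PowerSeries.coeff_derivative, Ee, map_neg, PowerSeries.coeff_rescale,
    PowerSeries.coeff_rescale, PowerSeries.coeff_exp, PowerSeries.coeff_exp]
  simp only [Algebra.algebraMap_self, RingHom.id_apply]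
  rw [Nat.factorial_succ, pow_succ]
  push_cast
  have h1 : (n.factorial : ℚ) ≠ 0 := Nat.cast_ne_zero.mpr n.factorial_ne_zero
  field_simp

lemma deriv_uu : d⁄dX ℚ uu = Ee := by
  rw [uu, map_sub, Derivation.map_one_eq_zero, deriv_Ee]
  simp

lemma deriv_Spb_mul (k N : ℕ) : d⁄dX ℚ (uu * Spb (k + 1) N) = Ee * Spb k N := by
  rw [Spb, Finset.mul_sum, map_sum, Spb, Finset.mul_sum]
  refine Finset.sum_congr rfl fun m _ => ?_
  have h1 : uu * (((m + 1 : ℚ) ^ (k + 1))⁻¹ • uu ^ m)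
      = ((m + 1 : ℚ) ^ (k + 1))⁻¹ • uu ^ (m + 1) := by
    rw [mul_smul_comm, ← pow_succ']
  rw [h1, Derivation.map_smul, Derivation.leibniz_pow, deriv_uu]
  have hm : ((m : ℚ) + 1) ≠ 0 := by positivity
  have hsc : ((m + 1 : ℚ) ^ (k + 1))⁻¹ * (m + 1 : ℚ) = ((m + 1 : ℚ) ^ k)⁻¹ := by
    rw [pow_succ, mul_inv, mul_assoc, inv_mul_cancel₀ hm, mul_one]
  rw [Nat.add_sub_cancel, smul_eq_mul, ← Nat.cast_smul_eq_nsmul ℚ, smul_smul]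
  push_cast
  rw [hsc, mul_smul_comm, mul_comm (uu ^ m) Ee]

lemma deriv_key (k : ℕ) : d⁄dX ℚ (uu * pbGF (k + 1)) = cGF k := by
  ext n
  rw [PowerSeries.coeff_derivative]
  have h1 : PowerSeries.coeff (R := ℚ) (n+1) (uu * pbGF (k+1))
      = PowerSeries.coeff (R := ℚ) (n+1) (uu * Spb (k+1) (n+2)) :=
    coeff_mul_congr _ _ _ _ (fun i hi => (coeff_Spb _ (by omega)).symm)
  have h2 : PowerSeries.coeff (R := ℚ) n (cGF k) = PowerSeries.coeff (R := ℚ) n (Ee * Spb k (n+2)) := by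
    rw [show cGF k = Ee * pbGF k from rfl]
    exact coeff_mul_congr _ _ _ _ (fun i hi => (coeff_Spb _ (by omega)).symm)
  rw [h1, h2, ← deriv_Spb_mul k (n+2), PowerSeries.coeff_derivative]

noncomputable def Gg (k : ℕ) : PowerSeries ℚ :=
  PowerSeries.mk fun n => polyCNum k n / (n + 1).factorial

lemma uPb_eq_X_mul (k : ℕ) : uu * pbGF (k + 1) = PowerSeries.X * Gg k := by
  ext n
  cases n with
  | zero =>
    rw [PowerSeries.coeff_zero_eq_constantCoeff, map_mul, hu0, zero_mul, map_mul,
      PowerSeries.constantCoeff_X, zero_mul]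
  | succ n =>
    have hd := congrArg (PowerSeries.coeff (R := ℚ) n) (deriv_key k)
    rw [PowerSeries.coeff_derivative] at hd
    rw [PowerSeries.coeff_succ_X_mul, Gg, PowerSeries.coeff_mk, polyCNum, Nat.factorial_succ]
    have hn : ((n : ℚ) + 1) ≠ 0 := by positivity
    have hf : ((n.factorial : ℚ)) ≠ 0 := Nat.cast_ne_zero.mpr n.factorial_ne_zero
    rw [← hd]
    push_cast
    field_simp

noncomputable def Bb (z : ℚ) : PowerSeries ℚ :=
  PowerSeries.mk fun n => Polynomial.aeval z ((1 / n.factorial : ℚ) • Polynomial.bernoulli n)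

lemma main_gf (k : ℕ) (z : ℚ) :
    PowerSeries.rescale z (PowerSeries.exp ℚ) * cGF (k + 1) = Bb z * Gg k := by
  have hX : (PowerSeries.X : ℚ⟦X⟧) ≠ 0 := PowerSeries.X_ne_zero
  have hexp : (PowerSeries.exp ℚ - 1 : ℚ⟦X⟧) ≠ 0 := by
    intro h
    have := congrArg (PowerSeries.coeff (R := ℚ) 1) h
    simp [PowerSeries.exp] at this
  apply mul_left_cancel₀ (mul_ne_zero hX hexp)
  have hB := Polynomial.bernoulli_generating_function (A := ℚ) z
  have hEe : PowerSeries.exp ℚ * Ee = 1 := by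
    rw [Ee]; exact PowerSeries.exp_mul_exp_neg_eq_one
  have hu : (PowerSeries.exp ℚ - 1) * Ee = uu := by
    rw [sub_mul, one_mul, uu, hEe]
  calc (PowerSeries.X * (PowerSeries.exp ℚ - 1)) * (PowerSeries.rescale z (PowerSeries.exp ℚ) * cGF (k + 1))
      = (PowerSeries.X * PowerSeries.rescale z (PowerSeries.exp ℚ)) *
        ((PowerSeries.exp ℚ - 1) * Ee * pbGF (k + 1)) := by
        rw [show cGF (k + 1) = Ee * pbGF (k + 1) from rfl]; ring
    _ = (PowerSeries.X * PowerSeries.rescale z (PowerSeries.exp ℚ)) * (PowerSeries.X * Gg k) := by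
        rw [hu, uPb_eq_X_mul]
    _ = (Bb z * (PowerSeries.exp ℚ - 1)) * (PowerSeries.X * Gg k) := by rw [Bb, hB]
    _ = (PowerSeries.X * (PowerSeries.exp ℚ - 1)) * (Bb z * Gg k) := by ring

lemma lhs_eq (k n : ℕ) (z : ℚ) :
    (n.factorial : ℚ) *
      PowerSeries.coeff (R := ℚ) n (PowerSeries.rescale z (PowerSeries.exp ℚ) * cGF k) =
    polyCPoly k n z := by
  rw [PowerSeries.coeff_mul, Finset.Nat.sum_antidiagonal_eq_sum_range_succ_mk, Finset.mul_sum,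
    polyCPoly, ← Finset.sum_range_reflect (fun j => (n.choose j : ℚ) * polyCNum k j * z ^ (n - j))
      (n + 1)]
  refine Finset.sum_congr rfl fun i hi => ?_
  have hi' : i ≤ n := by simpa [Nat.lt_succ_iff] using hi
  simp only
  rw [Nat.add_sub_cancel, Nat.sub_sub_self hi', Nat.choose_symm hi', polyCNum,
    PowerSeries.coeff_rescale, PowerSeries.coeff_exp]
  have h1 : (i.factorial : ℚ) ≠ 0 := Nat.cast_ne_zero.mpr i.factorial_ne_zero
  have h2 : ((n - i).factorial : ℚ) ≠ 0 := Nat.cast_ne_zero.mpr (n - i).factorial_ne_zero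
  rw [Nat.cast_choose ℚ hi']
  simp only [Algebra.algebraMap_self, RingHom.id_apply]
  field_simp

lemma rhs_eq (k n : ℕ) (z : ℚ) :
    (n.factorial : ℚ) * PowerSeries.coeff (R := ℚ) n (Bb z * Gg k) =
    ∑ m ∈ Finset.range (n + 1), (n.choose m : ℚ) *
        Polynomial.eval z (Polynomial.bernoulli m) *
        (polyCNum k (n - m) / ((n - m + 1 : ℕ) : ℚ)) := by
  rw [PowerSeries.coeff_mul, Finset.Nat.sum_antidiagonal_eq_sum_range_succ_mk, Finset.mul_sum]
  refine Finset.sum_congr rfl fun m hm => ?_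
  have hm' : m ≤ n := by simpa [Nat.lt_succ_iff] using hm
  rw [Bb, Gg, PowerSeries.coeff_mk, PowerSeries.coeff_mk, map_smul,
    ← Polynomial.coe_aeval_eq_eval]
  have h1 : (m.factorial : ℚ) ≠ 0 := Nat.cast_ne_zero.mpr m.factorial_ne_zero
  have h2 : ((n - m).factorial : ℚ) ≠ 0 := Nat.cast_ne_zero.mpr (n - m).factorial_ne_zero
  have h3 : ((n - m + 1 : ℕ) : ℚ) ≠ 0 := by positivity
  rw [Nat.cast_choose ℚ hm', Nat.factorial_succ (n - m)]
  push_cast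
  field_simp
  rw [smul_eq_mul, one_div]
  rw [← mul_assoc, mul_inv_cancel₀ h1, one_mul, mul_comm]

/-- Recurrence: `C_n^{(k)}(z) = ∑_{m=0}^n C(n,m) B_m(z) C_{n-m}^{(k-1)}/(n-m+1)`
for `k ≥ 2`, `n ≥ 0`. -/
theorem polyCPoly_recurrence (k : ℕ) (hk : 2 ≤ k) (n : ℕ) (z : ℚ) :
    polyCPoly k n z =
      ∑ m ∈ Finset.range (n + 1), (n.choose m : ℚ) *
        Polynomial.eval z (Polynomial.bernoulli m) *
        (polyCNum (k - 1) (n - m) / ((n - m + 1 : ℕ) : ℚ)) := by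
  have H := main_gf (k - 1) z
  rw [show k - 1 + 1 = k by omega] at H
  rw [← lhs_eq k n z, H, rhs_eq]
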